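/- arXiv:2008.10066 — 4 statements merged into one kernel-verified Lean document; each statement's English description precedes it below -/
import Mathlib

section
/- In a finite discounted MDP with |r(s,a)| ≤ Rmax for all (s,a), suppose V̂ : S → ℝ satisfies max_{s∈S} |V*(s) − V̂(s)| ≤ ε_v for some ε_v ≥ 0. Let π_V̂ be a stationary deterministic 1-step greedy policy with respect to V̂ under the true model, i.e., π_V̂(s) ∈ argmax_{a∈A} [r(s,a) + γ·Σ_{s'} p(s'|s,a)·V̂(s')] for every s ∈ S. Then for every state s, V*(s) − V^{π_V̂}(s) ≤ 2γ·ε_v/(1−γ). -/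
/-- State distribution at time `t` of a (possibly non-stationary) deterministic policy `π`
started from `s0`, under transition model `N`. -/
noncomputable def stateDist {S A : Type*} [Fintype S] [DecidableEq S]
    (N : S → A → S → ℝ) (π : ℕ → S → A) (s0 : S) : ℕ → S → ℝ
  | 0 => fun s => if s = s0 then 1 else 0
  | t + 1 => fun s' => ∑ s : S, stateDist N π s0 t s * N s (π t s) s'

/-- Discounted value of a (possibly non-stationary) deterministic policy. -/
noncomputable def value {S A : Type*} [Fintype S] [DecidableEq S]
    (p : S → A → S → ℝ) (r : S → A → ℝ) (γ : ℝ) (π : ℕ → S → A) (s0 : S) : ℝ :=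
  ∑' t : ℕ, γ ^ t * ∑ s : S, stateDist p π s0 t s * r s (π t s)

/-- Optimal value function: supremum of values over all deterministic policies. -/
noncomputable def vStar {S A : Type*} [Fintype S] [DecidableEq S]
    (p : S → A → S → ℝ) (r : S → A → ℝ) (γ : ℝ) (s0 : S) : ℝ :=
  ⨆ π : ℕ → S → A, value p r γ π s0

/-!
Both `V*` and the value `W` of the greedy policy `π` are controlled by the one-step lookahead
`Q_V(s, a) = r(s, a) + γ 𝔼[V(s') | s, a]`: `W` is its fixed point along `π`, while
`V*(s) ≤ max_a Q_{V*}(s, a)`. Since `V̂` is `ε`-close to `V*`, the lookahead of `V*` at any action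
exceeds that at the action `π(s)`, chosen greedily for `V̂`, by at most `2γε`. Hence at a state
where `V* - W` is maximal, `max (V* - W) ≤ 2γε + γ max (V* - W)`.
-/

open Finset

section ProbabilityVector

variable {S : Type*} [Fintype S] {q f : S → ℝ} {c : ℝ}

lemma sum_mul_le_of_forall_le (hq0 : ∀ s, 0 ≤ q s) (hq1 : ∑ s, q s = 1) (h : ∀ s, f s ≤ c) :
    ∑ s, q s * f s ≤ c :=
  calc ∑ s, q s * f s ≤ ∑ s, q s * c :=
        sum_le_sum fun s _ => mul_le_mul_of_nonneg_left (h s) (hq0 s)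
    _ = c := by rw [← sum_mul, hq1, one_mul]

lemma abs_sum_mul_le_of_forall_abs_le (hq0 : ∀ s, 0 ≤ q s) (hq1 : ∑ s, q s = 1)
    (h : ∀ s, |f s| ≤ c) : |∑ s, q s * f s| ≤ c := by
  have hneg : ∑ s, q s * -f s ≤ c :=
    sum_mul_le_of_forall_le hq0 hq1 fun s => (neg_le_abs _).trans (h s)
  simp only [mul_neg, sum_neg_distrib] at hneg
  exact abs_le.2 ⟨by linarith, sum_mul_le_of_forall_le hq0 hq1 fun s => (le_abs_self _).trans (h s)⟩

end ProbabilityVector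

noncomputable def qValue {S A : Type*} [Fintype S] (p : S → A → S → ℝ) (r : S → A → ℝ) (γ : ℝ)
    (V : S → ℝ) (s : S) (a : A) : ℝ :=
  r s a + γ * ∑ s', p s a s' * V s'

section Lookahead

variable {S A : Type*} [Fintype S] {p : S → A → S → ℝ} {r : S → A → ℝ} {γ : ℝ}

lemma qValue_sub_qValue (V W : S → ℝ) (s : S) (a : A) :
    qValue p r γ V s a - qValue p r γ W s a = γ * ∑ s', p s a s' * (V s' - W s') := by
  simp only [qValue, mul_sub, sum_sub_distrib]
  ring

lemma qValue_mono (hp0 : ∀ s a s', 0 ≤ p s a s') (hγ : 0 ≤ γ) {V W : S → ℝ}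
    (h : ∀ s, V s ≤ W s) (s : S) (a : A) : qValue p r γ V s a ≤ qValue p r γ W s a := by
  unfold qValue
  gcongr with s' _
  exacts [hp0 s a s', h s']

lemma abs_qValue_sub_le (hp0 : ∀ s a s', 0 ≤ p s a s') (hp1 : ∀ s a, ∑ s', p s a s' = 1)
    (hγ : 0 ≤ γ) {V W : S → ℝ} {ε : ℝ} (h : ∀ s, |V s - W s| ≤ ε) (s : S) (a : A) :
    |qValue p r γ V s a - qValue p r γ W s a| ≤ γ * ε := by
  rw [qValue_sub_qValue, abs_mul, abs_of_nonneg hγ]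
  exact mul_le_mul_of_nonneg_left
    (abs_sum_mul_le_of_forall_abs_le (hp0 s a) (hp1 s a) h) hγ

lemma qValue_le_qValue_greedy_add (hp0 : ∀ s a s', 0 ≤ p s a s')
    (hp1 : ∀ s a, ∑ s', p s a s' = 1) (hγ : 0 ≤ γ) {V Vhat : S → ℝ} {ε : ℝ}
    (hV : ∀ s, |V s - Vhat s| ≤ ε) {s : S} {b : A}
    (hgreedy : ∀ a, qValue p r γ Vhat s a ≤ qValue p r γ Vhat s b) (a : A) :
    qValue p r γ V s a ≤ qValue p r γ V s b + 2 * γ * ε := by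
  have ha := abs_le.1 (abs_qValue_sub_le (r := r) hp0 hp1 hγ hV s a)
  have hb := abs_le.1 (abs_qValue_sub_le (r := r) hp0 hp1 hγ hV s b)
  linarith [hgreedy a]

lemma sub_le_div_of_le_qValue_add (hp0 : ∀ s a s', 0 ≤ p s a s')
    (hp1 : ∀ s a, ∑ s', p s a s' = 1) (hγ0 : 0 ≤ γ) (hγ1 : γ < 1) {π : S → A}
    {V W : S → ℝ} {δ : ℝ}
    (hV : ∀ s, V s ≤ qValue p r γ V s (π s) + δ) (hW : ∀ s, W s = qValue p r γ W s (π s))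
    (s : S) : V s - W s ≤ δ / (1 - γ) := by
  have : Nonempty S := ⟨s⟩
  obtain ⟨s₀, hs₀⟩ := Finite.exists_max fun s => V s - W s
  have hstep : V s₀ - W s₀ ≤ δ + γ * (V s₀ - W s₀) := by
    have hmean : ∑ s', p s₀ (π s₀) s' * (V s' - W s') ≤ V s₀ - W s₀ :=
      sum_mul_le_of_forall_le (hp0 s₀ (π s₀)) (hp1 s₀ (π s₀)) hs₀
    have hdiff := qValue_sub_qValue (p := p) (r := r) (γ := γ) V W s₀ (π s₀)
    linarith [hV s₀, hW s₀, mul_le_mul_of_nonneg_left hmean hγ0]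
  rw [le_div_iff₀ (by linarith)]
  nlinarith [hs₀ s]

end Lookahead

section Value

variable {S A : Type*} [Fintype S] [DecidableEq S] {p : S → A → S → ℝ} {r : S → A → ℝ}
  {γ Rmax : ℝ}

lemma stateDist_nonneg (hp0 : ∀ s a s', 0 ≤ p s a s') (π : ℕ → S → A) (s0 : S) :
    ∀ t s, 0 ≤ stateDist p π s0 t s
  | 0, s => by simp only [stateDist]; split_ifs <;> norm_num
  | t + 1, s => sum_nonneg fun s' _ => mul_nonneg (stateDist_nonneg hp0 π s0 t s') (hp0 _ _ _)

lemma sum_stateDist (hp1 : ∀ s a, ∑ s', p s a s' = 1) (π : ℕ → S → A) (s0 : S) :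
    ∀ t, ∑ s, stateDist p π s0 t s = 1
  | 0 => by simp [stateDist]
  | t + 1 => by
    simp only [stateDist]
    rw [sum_comm]
    simp_rw [← mul_sum, hp1, mul_one]
    exact sum_stateDist hp1 π s0 t

lemma stateDist_succ_eq_sum_shift (π : ℕ → S → A) (s0 : S) :
    ∀ t s', stateDist p π s0 (t + 1) s' =
      ∑ s1, p s0 (π 0 s0) s1 * stateDist p (fun k => π (k + 1)) s1 t s'
  | 0, s' => by
    simp only [stateDist, ite_mul, one_mul, zero_mul, mul_ite, mul_one, mul_zero,
      sum_ite_eq' univ s0, sum_ite_eq univ s', mem_univ, if_true]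
  | t + 1, s' => by
    change ∑ s, stateDist p π s0 (t + 1) s * p s (π (t + 1) s) s' = _
    simp_rw [stateDist_succ_eq_sum_shift π s0 t, sum_mul]
    rw [sum_comm]
    refine sum_congr rfl fun s1 _ => ?_
    change _ = p s0 (π 0 s0) s1 *
      ∑ s, stateDist p (fun k => π (k + 1)) s1 t s * p s (π (t + 1) s) s'
    rw [mul_sum]
    exact sum_congr rfl fun s _ => by ring

lemma abs_expectedReward_le (hp0 : ∀ s a s', 0 ≤ p s a s') (hp1 : ∀ s a, ∑ s', p s a s' = 1)
    (hr : ∀ s a, |r s a| ≤ Rmax) (π : ℕ → S → A) (s0 : S) (t : ℕ) :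
    |∑ s, stateDist p π s0 t s * r s (π t s)| ≤ Rmax :=
  abs_sum_mul_le_of_forall_abs_le (stateDist_nonneg hp0 π s0 t) (sum_stateDist hp1 π s0 t)
    fun s => hr s (π t s)

lemma discountedReward_le (hp0 : ∀ s a s', 0 ≤ p s a s') (hp1 : ∀ s a, ∑ s', p s a s' = 1)
    (hγ0 : 0 ≤ γ) (hr : ∀ s a, |r s a| ≤ Rmax) (π : ℕ → S → A) (s0 : S) (t : ℕ) :
    ‖γ ^ t * ∑ s, stateDist p π s0 t s * r s (π t s)‖ ≤ Rmax * γ ^ t := by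
  rw [Real.norm_eq_abs, abs_mul, abs_of_nonneg (pow_nonneg hγ0 t), mul_comm]
  exact mul_le_mul_of_nonneg_right (abs_expectedReward_le hp0 hp1 hr π s0 t) (pow_nonneg hγ0 t)

lemma summable_discountedReward (hp0 : ∀ s a s', 0 ≤ p s a s')
    (hp1 : ∀ s a, ∑ s', p s a s' = 1) (hγ0 : 0 ≤ γ) (hγ1 : γ < 1)
    (hr : ∀ s a, |r s a| ≤ Rmax) (π : ℕ → S → A) (s0 : S) :
    Summable fun t => γ ^ t * ∑ s, stateDist p π s0 t s * r s (π t s) :=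
  .of_norm_bounded ((summable_geometric_of_lt_one hγ0 hγ1).mul_left Rmax)
    (discountedReward_le hp0 hp1 hγ0 hr π s0)

lemma value_le (hp0 : ∀ s a s', 0 ≤ p s a s') (hp1 : ∀ s a, ∑ s', p s a s' = 1)
    (hγ0 : 0 ≤ γ) (hγ1 : γ < 1) (hr : ∀ s a, |r s a| ≤ Rmax) (π : ℕ → S → A) (s0 : S) :
    value p r γ π s0 ≤ Rmax * (1 - γ)⁻¹ :=
  hasSum_le (fun t => le_of_abs_le (discountedReward_le hp0 hp1 hγ0 hr π s0 t))
    (summable_discountedReward hp0 hp1 hγ0 hγ1 hr π s0).hasSum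
    ((hasSum_geometric_of_lt_one hγ0 hγ1).mul_left Rmax)

lemma value_le_vStar (hp0 : ∀ s a s', 0 ≤ p s a s') (hp1 : ∀ s a, ∑ s', p s a s' = 1)
    (hγ0 : 0 ≤ γ) (hγ1 : γ < 1) (hr : ∀ s a, |r s a| ≤ Rmax) (π : ℕ → S → A) (s0 : S) :
    value p r γ π s0 ≤ vStar p r γ s0 :=
  le_ciSup ⟨_, Set.forall_mem_range.2 fun π => value_le hp0 hp1 hγ0 hγ1 hr π s0⟩ π

lemma value_eq_qValue (hp0 : ∀ s a s', 0 ≤ p s a s') (hp1 : ∀ s a, ∑ s', p s a s' = 1)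
    (hγ0 : 0 ≤ γ) (hγ1 : γ < 1) (hr : ∀ s a, |r s a| ≤ Rmax) (π : ℕ → S → A) (s0 : S) :
    value p r γ π s0 = qValue p r γ (value p r γ fun k => π (k + 1)) s0 (π 0 s0) := by
  have hsummable s1 := summable_discountedReward hp0 hp1 hγ0 hγ1 hr (fun k => π (k + 1)) s1
  have hshift (t : ℕ) :
      γ ^ (t + 1) * ∑ s', stateDist p π s0 (t + 1) s' * r s' (π (t + 1) s') =
        ∑ s1, p s0 (π 0 s0) s1 * (γ * (γ ^ t *
          ∑ s', stateDist p (fun k => π (k + 1)) s1 t s' * r s' (π (t + 1) s'))) := by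
    simp_rw [stateDist_succ_eq_sum_shift π s0 t, sum_mul, mul_sum]
    rw [sum_comm]
    exact sum_congr rfl fun s1 _ => sum_congr rfl fun s' _ => by ring
  rw [value, (summable_discountedReward hp0 hp1 hγ0 hγ1 hr π s0).tsum_eq_zero_add, qValue]
  congr 1
  · simp [stateDist]
  · simp_rw [hshift]
    rw [Summable.tsum_finsetSum fun s1 _ => ((hsummable s1).mul_left γ).mul_left _, mul_sum]
    refine sum_congr rfl fun s1 _ => ?_
    rw [tsum_mul_left, tsum_mul_left, value]
    ring

lemma vStar_le_of_forall_qValue_le [Nonempty A] (hp0 : ∀ s a s', 0 ≤ p s a s')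
    (hp1 : ∀ s a, ∑ s', p s a s' = 1) (hγ0 : 0 ≤ γ) (hγ1 : γ < 1)
    (hr : ∀ s a, |r s a| ≤ Rmax) {s0 : S} {c : ℝ}
    (h : ∀ a, qValue p r γ (vStar p r γ) s0 a ≤ c) : vStar p r γ s0 ≤ c :=
  ciSup_le fun π => by
    rw [value_eq_qValue hp0 hp1 hγ0 hγ1 hr]
    exact (qValue_mono hp0 hγ0 (value_le_vStar hp0 hp1 hγ0 hγ1 hr _) s0 _).trans (h _)

end Value

theorem greedy_policy_suboptimality_general
    {S A : Type*} [Fintype S] [DecidableEq S]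
    (p : S → A → S → ℝ) (r : S → A → ℝ) (γ Rmax εv : ℝ)
    (hp_nonneg : ∀ s a s', 0 ≤ p s a s')
    (hp_sum : ∀ s a, ∑ s' : S, p s a s' = 1)
    (hγ0 : 0 < γ) (hγ1 : γ < 1)
    (hr : ∀ s a, |r s a| ≤ Rmax)
    (Vhat : S → ℝ)
    (hVhat : ∀ s, |vStar p r γ s - Vhat s| ≤ εv)
    (πg : S → A)
    (hgreedy : ∀ s a, r s a + γ * ∑ s' : S, p s a s' * Vhat s' ≤
      r s (πg s) + γ * ∑ s' : S, p s (πg s) s' * Vhat s')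
    (s : S) :
    vStar p r γ s - value p r γ (fun _ => πg) s ≤ 2 * γ * εv / (1 - γ) := by
  have : Nonempty A := ⟨πg s⟩
  have hV (s0 : S) : vStar p r γ s0 ≤ qValue p r γ (vStar p r γ) s0 (πg s0) + 2 * γ * εv :=
    vStar_le_of_forall_qValue_le hp_nonneg hp_sum hγ0.le hγ1 hr
      (qValue_le_qValue_greedy_add hp_nonneg hp_sum hγ0.le hVhat (hgreedy s0))
  have hW (s0 : S) : value p r γ (fun _ => πg) s0 =
      qValue p r γ (value p r γ fun _ => πg) s0 (πg s0) :=
    value_eq_qValue hp_nonneg hp_sum hγ0.le hγ1 hr _ s0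
  exact sub_le_div_of_le_qValue_add hp_nonneg hp_sum hγ0.le hγ1 hV hW s

/-- Suboptimality of the 1-step greedy policy with respect to an approximate value function. -/
theorem greedy_policy_suboptimality
    {S A : Type*} [Fintype S] [DecidableEq S] [Nonempty S] [Fintype A] [Nonempty A]
    (p : S → A → S → ℝ) (r : S → A → ℝ) (γ Rmax εv : ℝ)
    (hp_nonneg : ∀ s a s', 0 ≤ p s a s')
    (hp_sum : ∀ s a, ∑ s' : S, p s a s' = 1)
    (hγ0 : 0 < γ) (hγ1 : γ < 1)
    (hr : ∀ s a, |r s a| ≤ Rmax)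
    (hεv : 0 ≤ εv)
    (Vhat : S → ℝ)
    (hVhat : ∀ s, |vStar p r γ s - Vhat s| ≤ εv)
    (πg : S → A)
    (hgreedy : ∀ s a, r s a + γ * ∑ s' : S, p s a s' * Vhat s' ≤
      r s (πg s) + γ * ∑ s' : S, p s (πg s) s' * Vhat s')
    (s : S) :
    vStar p r γ s - value p r γ (fun _ => πg) s ≤ 2 * γ * εv / (1 - γ) :=
  greedy_policy_suboptimality_general p r γ Rmax εv hp_nonneg hp_sum hγ0 hγ1 hr Vhat hVhat πg
    hgreedy s
end

section
/- (State-action marginal total variation propagation under model and policy error.) Let S and A be nonempty finite sets. For i ∈ {1,2}, let M_i be a transition model (M_i(·|s,a) a probability mass function on S for each (s,a)) and let π_i be a stochastic policy (π_i(·|s) a probability mass function on A for each s). Suppose D_TV(M_1(·|s,a), M_2(·|s,a)) ≤ ε_m for all (s,a) and D_TV(π_1(·|s), π_2(·|s)) ≤ ε_π for all s. Fix an initial probability mass function μ on S and for i ∈ {1,2} define state distributions d_i^0 = μ, state-action distributions ρ_i^t(s,a) = d_i^t(s)·π_i(a|s), and d_i^{t+1}(s') = Σ_{s,a} ρ_i^t(s,a)·M_i(s'|s,a).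 Then for every t ≥ 0, D_TV(ρ_1^t, ρ_2^t) ≤ t·(ε_m + ε_π) + ε_π. -/
/-- Total variation distance between two functions (e.g. probability mass functions)
on a finite set. -/
noncomputable def tvDist {X : Type*} [Fintype X] (μ ν : X → ℝ) : ℝ :=
  (1 / 2) * ∑ x : X, |μ x - ν x|

lemma tvDist_sum_abs {X : Type*} [Fintype X] (μ ν : X → ℝ) :
    ∑ x : X, |μ x - ν x| = 2 * tvDist μ ν := by
  unfold tvDist; ring

lemma abs_mul_sub_mul (a b c d : ℝ) (hb : 0 ≤ b) (hc : 0 ≤ c) :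
    |a * b - c * d| ≤ |a - c| * b + c * |b - d| := by
  have h : a * b - c * d = (a - c) * b + c * (b - d) := by ring
  rw [h]
  calc |(a - c) * b + c * (b - d)| ≤ |(a - c) * b| + |c * (b - d)| := abs_add_le _ _
    _ = |a - c| * b + c * |b - d| := by
        rw [abs_mul, abs_mul, abs_of_nonneg hb, abs_of_nonneg hc]

/-- State-action marginal total variation propagation under model and policy error. -/
theorem state_action_tv_propagation
    {S A : Type*} [Fintype S] [Nonempty S] [Fintype A] [Nonempty A]
    (M₁ M₂ : S → A → S → ℝ) (π₁ π₂ : S → A → ℝ) (εm επ : ℝ)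
    (hM₁_nonneg : ∀ s a s', 0 ≤ M₁ s a s') (hM₁_sum : ∀ s a, ∑ s' : S, M₁ s a s' = 1)
    (hM₂_nonneg : ∀ s a s', 0 ≤ M₂ s a s') (hM₂_sum : ∀ s a, ∑ s' : S, M₂ s a s' = 1)
    (hπ₁_nonneg : ∀ s a, 0 ≤ π₁ s a) (hπ₁_sum : ∀ s, ∑ a : A, π₁ s a = 1)
    (hπ₂_nonneg : ∀ s a, 0 ≤ π₂ s a) (hπ₂_sum : ∀ s, ∑ a : A, π₂ s a = 1)
    (hTVm : ∀ s a, tvDist (M₁ s a) (M₂ s a) ≤ εm)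
    (hTVπ : ∀ s, tvDist (π₁ s) (π₂ s) ≤ επ)
    (μ : S → ℝ) (hμ_nonneg : ∀ s, 0 ≤ μ s) (hμ_sum : ∑ s : S, μ s = 1)
    (d₁ d₂ : ℕ → S → ℝ)
    (hd₁_init : d₁ 0 = μ) (hd₂_init : d₂ 0 = μ)
    (hd₁_rec : ∀ t s', d₁ (t + 1) s' = ∑ s : S, ∑ a : A, d₁ t s * π₁ s a * M₁ s a s')
    (hd₂_rec : ∀ t s', d₂ (t + 1) s' = ∑ s : S, ∑ a : A, d₂ t s * π₂ s a * M₂ s a s')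
    (t : ℕ) :
    tvDist (fun sa : S × A => d₁ t sa.1 * π₁ sa.1 sa.2)
        (fun sa : S × A => d₂ t sa.1 * π₂ sa.1 sa.2) ≤
      (t : ℝ) * (εm + επ) + επ := by
  -- d₁, d₂ are probability mass functions at every time
  have hd₁ : ∀ u, (∀ s, 0 ≤ d₁ u s) ∧ ∑ s : S, d₁ u s = 1 := by
    intro u
    induction u with
    | zero => rw [hd₁_init]; exact ⟨hμ_nonneg, hμ_sum⟩
    | succ u ih =>
      constructor
      · intro s'
        rw [hd₁_rec]
        exact Finset.sum_nonneg fun s _ => Finset.sum_nonneg fun a _ =>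
          mul_nonneg (mul_nonneg (ih.1 s) (hπ₁_nonneg s a)) (hM₁_nonneg s a s')
      · simp_rw [hd₁_rec]
        calc ∑ s' : S, ∑ s : S, ∑ a : A, d₁ u s * π₁ s a * M₁ s a s'
            = ∑ s : S, ∑ a : A, ∑ s' : S, d₁ u s * π₁ s a * M₁ s a s' := by
              rw [Finset.sum_comm]
              exact Finset.sum_congr rfl fun s _ => by rw [Finset.sum_comm]
          _ = 1 := by
              simp only [← Finset.mul_sum, hM₁_sum, mul_one, hπ₁_sum]
              exact ih.2
  have hd₂ : ∀ u, (∀ s, 0 ≤ d₂ u s) ∧ ∑ s : S, d₂ u s = 1 := by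
    intro u
    induction u with
    | zero => rw [hd₂_init]; exact ⟨hμ_nonneg, hμ_sum⟩
    | succ u ih =>
      constructor
      · intro s'
        rw [hd₂_rec]
        exact Finset.sum_nonneg fun s _ => Finset.sum_nonneg fun a _ =>
          mul_nonneg (mul_nonneg (ih.1 s) (hπ₂_nonneg s a)) (hM₂_nonneg s a s')
      · simp_rw [hd₂_rec]
        calc ∑ s' : S, ∑ s : S, ∑ a : A, d₂ u s * π₂ s a * M₂ s a s'
            = ∑ s : S, ∑ a : A, ∑ s' : S, d₂ u s * π₂ s a * M₂ s a s' := by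
              rw [Finset.sum_comm]
              exact Finset.sum_congr rfl fun s _ => by rw [Finset.sum_comm]
          _ = 1 := by
              simp only [← Finset.mul_sum, hM₂_sum, mul_one, hπ₂_sum]
              exact ih.2
  -- policy step
  have stepπ : ∀ u, tvDist (fun sa : S × A => d₁ u sa.1 * π₁ sa.1 sa.2)
      (fun sa : S × A => d₂ u sa.1 * π₂ sa.1 sa.2) ≤ tvDist (d₁ u) (d₂ u) + επ := by
    intro u
    have h1 : ∑ sa : S × A, |d₁ u sa.1 * π₁ sa.1 sa.2 - d₂ u sa.1 * π₂ sa.1 sa.2|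
        ≤ ∑ s : S, (|d₁ u s - d₂ u s| + d₂ u s * (2 * επ)) := by
      rw [Fintype.sum_prod_type]
      apply Finset.sum_le_sum
      intro s _
      calc ∑ a : A, |d₁ u s * π₁ s a - d₂ u s * π₂ s a|
          ≤ ∑ a : A, (|d₁ u s - d₂ u s| * π₁ s a + d₂ u s * |π₁ s a - π₂ s a|) :=
            Finset.sum_le_sum fun a _ =>
              abs_mul_sub_mul _ _ _ _ (hπ₁_nonneg s a) ((hd₂ u).1 s)
        _ = |d₁ u s - d₂ u s| * (∑ a : A, π₁ s a)
              + d₂ u s * ∑ a : A, |π₁ s a - π₂ s a| := by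
            rw [Finset.sum_add_distrib, ← Finset.mul_sum, ← Finset.mul_sum]
        _ ≤ |d₁ u s - d₂ u s| + d₂ u s * (2 * επ) := by
            rw [hπ₁_sum, mul_one, tvDist_sum_abs]
            have := hTVπ s
            have h2 := (hd₂ u).1 s
            nlinarith
    rw [Finset.sum_add_distrib, ← Finset.sum_mul, (hd₂ u).2, one_mul] at h1
    simp only [tvDist]
    linarith
  -- model step
  have stepm : ∀ u, tvDist (d₁ (u + 1)) (d₂ (u + 1)) ≤
      tvDist (fun sa : S × A => d₁ u sa.1 * π₁ sa.1 sa.2)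
        (fun sa : S × A => d₂ u sa.1 * π₂ sa.1 sa.2) + εm := by
    intro u
    have h1 : ∑ s' : S, |d₁ (u + 1) s' - d₂ (u + 1) s'|
        ≤ ∑ s : S, ∑ a : A, (|d₁ u s * π₁ s a - d₂ u s * π₂ s a|
            + d₁ u s * π₁ s a * 0 + d₂ u s * π₂ s a * (2 * εm)) := by
      calc ∑ s' : S, |d₁ (u + 1) s' - d₂ (u + 1) s'|
          ≤ ∑ s' : S, ∑ s : S, ∑ a : A,
              |d₁ u s * π₁ s a * M₁ s a s' - d₂ u s * π₂ s a * M₂ s a s'| := by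
            apply Finset.sum_le_sum
            intro s' _
            rw [hd₁_rec, hd₂_rec, ← Finset.sum_sub_distrib]
            refine (Finset.abs_sum_le_sum_abs _ _).trans ?_
            apply Finset.sum_le_sum
            intro s _
            rw [← Finset.sum_sub_distrib]
            exact Finset.abs_sum_le_sum_abs _ _
        _ = ∑ s : S, ∑ a : A, ∑ s' : S,
              |d₁ u s * π₁ s a * M₁ s a s' - d₂ u s * π₂ s a * M₂ s a s'| := by
            rw [Finset.sum_comm]
            exact Finset.sum_congr rfl fun s _ => by rw [Finset.sum_comm]
        _ ≤ _ := by
            apply Finset.sum_le_sum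
            intro s _
            apply Finset.sum_le_sum
            intro a _
            have hρ₂ : 0 ≤ d₂ u s * π₂ s a := mul_nonneg ((hd₂ u).1 s) (hπ₂_nonneg s a)
            calc ∑ s' : S, |d₁ u s * π₁ s a * M₁ s a s' - d₂ u s * π₂ s a * M₂ s a s'|
                ≤ ∑ s' : S, (|d₁ u s * π₁ s a - d₂ u s * π₂ s a| * M₁ s a s'
                    + d₂ u s * π₂ s a * |M₁ s a s' - M₂ s a s'|) :=
                  Finset.sum_le_sum fun s' _ =>
                    abs_mul_sub_mul _ _ _ _ (hM₁_nonneg s a s') hρ₂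
              _ = |d₁ u s * π₁ s a - d₂ u s * π₂ s a| * (∑ s' : S, M₁ s a s')
                    + d₂ u s * π₂ s a * ∑ s' : S, |M₁ s a s' - M₂ s a s'| := by
                  rw [Finset.sum_add_distrib, ← Finset.mul_sum, ← Finset.mul_sum]
              _ ≤ _ := by
                  rw [hM₁_sum, mul_one, tvDist_sum_abs]
                  have := hTVm s a
                  nlinarith
    simp only [mul_zero, add_zero] at h1
    have hsum2 : ∑ s : S, ∑ a : A, d₂ u s * π₂ s a * (2 * εm) = 2 * εm := by
      simp_rw [← Finset.sum_mul, ← Finset.mul_sum, hπ₂_sum, mul_one]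
      rw [(hd₂ u).2, one_mul]
    simp_rw [Finset.sum_add_distrib] at h1
    rw [hsum2] at h1
    have hprod : ∑ sa : S × A, |d₁ u sa.1 * π₁ sa.1 sa.2 - d₂ u sa.1 * π₂ sa.1 sa.2|
        = ∑ s : S, ∑ a : A, |d₁ u s * π₁ s a - d₂ u s * π₂ s a| :=
      Fintype.sum_prod_type _
    simp only [tvDist]
    rw [hprod]
    linarith
  -- main induction on state distributions
  have main : ∀ u, tvDist (d₁ u) (d₂ u) ≤ (u : ℝ) * (εm + επ) := by
    intro u
    induction u with
    | zero => simp [hd₁_init, hd₂_init, tvDist]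
    | succ u ih =>
      have h1 := stepm u
      have h2 := stepπ u
      push_cast
      linarith
  linarith [stepπ t, main t]
end

section
/- (H-step lookahead objective gap between two models for a fixed policy.) In a finite discounted MDP with 0 ≤ r(s,a) ≤ Rmax for all (s,a), let M̂ be a second transition model with D_TV(p(·|s,a), M̂(·|s,a)) ≤ ε_m for all (s,a) ∈ S×A, let V̂ : S → ℝ satisfy 0 ≤ V̂(s) ≤ Vmax for all s, and fix a horizon H ≥ 1. Then for every state s ∈ S and every H-step policy π, |L_{H,V̂}(s,π;p) − L_{H,V̂}(s,π;M̂)| ≤ Rmax·Σ_{t=0}^{H−1} γ^t·t·ε_m + γ^H·H·ε_m·Vmax. -/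
/-- H-step lookahead objective of an H-step policy `π` (only its first `H` maps are used),
under transition model `N`, with terminal value function `Vhat`. -/
noncomputable def lookahead {S A : Type*} [Fintype S] [DecidableEq S]
    (N : S → A → S → ℝ) (r : S → A → ℝ) (γ : ℝ) (Vhat : S → ℝ) (H : ℕ)
    (π : ℕ → S → A) (s : S) : ℝ :=
  (∑ t ∈ Finset.range H, γ ^ t * ∑ s' : S, stateDist N π s t s' * r s' (π t s')) +
    γ ^ H * ∑ s' : S, stateDist N π s H s' * Vhat s'

lemma stateDist_basic {S A : Type*} [Fintype S] [DecidableEq S]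
    (N : S → A → S → ℝ) (π : ℕ → S → A) (s0 : S)
    (hN0 : ∀ s a s', 0 ≤ N s a s') (hN1 : ∀ s a, ∑ s' : S, N s a s' = 1) :
    ∀ t, (∀ s', 0 ≤ stateDist N π s0 t s') ∧ (∑ s' : S, stateDist N π s0 t s' = 1) := by
  intro t
  induction t with
  | zero =>
    constructor
    · intro s'
      simp only [stateDist]
      split <;> norm_num
    · simp [stateDist]
  | succ t ih =>
    constructor
    · intro s'
      simp only [stateDist]
      exact Finset.sum_nonneg fun i _ => mul_nonneg (ih.1 i) (hN0 _ _ _)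
    · simp only [stateDist]
      rw [Finset.sum_comm]
      calc ∑ s1 : S, ∑ s' : S, stateDist N π s0 t s1 * N s1 (π t s1) s'
          = ∑ s1 : S, stateDist N π s0 t s1 * ∑ s' : S, N s1 (π t s1) s' := by
            simp [Finset.mul_sum]
        _ = 1 := by
            simp only [hN1, mul_one]
            exact ih.2

/-- H-step lookahead objective gap between the true model and an approximate model,
for a fixed H-step policy. -/
theorem lookahead_model_gap
    {S A : Type*} [Fintype S] [DecidableEq S] [Nonempty S] [Fintype A] [Nonempty A]
    (p Mhat : S → A → S → ℝ) (r : S → A → ℝ) (γ Rmax Vmax εm : ℝ) (H : ℕ)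
    (hp_nonneg : ∀ s a s', 0 ≤ p s a s')
    (hp_sum : ∀ s a, ∑ s' : S, p s a s' = 1)
    (hM_nonneg : ∀ s a s', 0 ≤ Mhat s a s')
    (hM_sum : ∀ s a, ∑ s' : S, Mhat s a s' = 1)
    (hγ0 : 0 < γ) (hγ1 : γ < 1) (hH : 1 ≤ H)
    (hTV : ∀ s a, (1 / 2) * ∑ s' : S, |p s a s' - Mhat s a s'| ≤ εm)
    (hr0 : ∀ s a, 0 ≤ r s a) (hrmax : ∀ s a, r s a ≤ Rmax)
    (Vhat : S → ℝ)
    (hV0 : ∀ s, 0 ≤ Vhat s) (hVmax : ∀ s, Vhat s ≤ Vmax)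
    (s : S) (π : ℕ → S → A) :
    |lookahead p r γ Vhat H π s - lookahead Mhat r γ Vhat H π s| ≤
      Rmax * (∑ t ∈ Finset.range H, γ ^ t * (t : ℝ) * εm) + γ ^ H * (H : ℝ) * εm * Vmax := by
  set d := stateDist p π s with hd_def
  set e := stateDist Mhat π s with he_def
  have hd := stateDist_basic p π s hp_nonneg hp_sum
  have he := stateDist_basic Mhat π s hM_nonneg hM_sum
  have hεm : 0 ≤ εm := by
    refine le_trans ?_ (hTV s (Classical.arbitrary A))
    positivity
  have hTV2 : ∀ s1 a, ∑ s' : S, |p s1 a s' - Mhat s1 a s'| ≤ 2 * εm := by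
    intro s1 a
    have := hTV s1 a
    linarith
  -- L1 bound on state distributions
  have hl1 : ∀ t, ∑ s' : S, |d t s' - e t s'| ≤ 2 * t * εm := by
    intro t
    induction t with
    | zero => simp [hd_def, he_def, stateDist]
    | succ t ih =>
      have key : ∀ s'' : S, d (t+1) s'' - e (t+1) s'' =
          ∑ s1 : S, ((d t s1 - e t s1) * p s1 (π t s1) s''
            + e t s1 * (p s1 (π t s1) s'' - Mhat s1 (π t s1) s'')) := by
        intro s''
        simp only [hd_def, he_def, stateDist, ← Finset.sum_sub_distrib]
        exact Finset.sum_congr rfl fun s1 _ => by ring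
      calc ∑ s'' : S, |d (t+1) s'' - e (t+1) s''|
          ≤ ∑ s'' : S, ∑ s1 : S, (|d t s1 - e t s1| * p s1 (π t s1) s''
              + e t s1 * |p s1 (π t s1) s'' - Mhat s1 (π t s1) s''|) := by
            refine Finset.sum_le_sum fun s'' _ => ?_
            rw [key s'']
            refine (Finset.abs_sum_le_sum_abs _ _).trans ?_
            refine Finset.sum_le_sum fun s1 _ => ?_
            refine (abs_add_le _ _).trans ?_
            rw [abs_mul, abs_mul, abs_of_nonneg (hp_nonneg _ _ _),
              abs_of_nonneg ((he t).1 s1)]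
        _ = ∑ s1 : S, (|d t s1 - e t s1| * ∑ s'' : S, p s1 (π t s1) s''
              + e t s1 * ∑ s'' : S, |p s1 (π t s1) s'' - Mhat s1 (π t s1) s''|) := by
            rw [Finset.sum_comm]
            simp [Finset.mul_sum, Finset.sum_add_distrib]
        _ ≤ ∑ s1 : S, (|d t s1 - e t s1| * 1 + e t s1 * (2 * εm)) := by
            refine Finset.sum_le_sum fun s1 _ => ?_
            exact add_le_add
              (mul_le_mul_of_nonneg_left (hp_sum _ _).le (abs_nonneg _))
              (mul_le_mul_of_nonneg_left (hTV2 _ _) ((he t).1 s1))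
        _ = (∑ s1 : S, |d t s1 - e t s1|) + (∑ s1 : S, e t s1) * (2 * εm) := by
            rw [Finset.sum_add_distrib, Finset.sum_mul]
            simp [mul_one]
        _ ≤ 2 * t * εm + 1 * (2 * εm) := by
            rw [(he t).2]
            linarith
        _ = 2 * (t + 1 : ℕ) * εm := by push_cast; ring
  -- expectation bound
  have hint : ∀ (t : ℕ) (f : S → ℝ) (C : ℝ), (∀ x, 0 ≤ f x) → (∀ x, f x ≤ C) →
      |(∑ s' : S, d t s' * f s') - ∑ s' : S, e t s' * f s'| ≤ C * t * εm := by
    intro t f C hf0 hfC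
    have hC : 0 ≤ C := (hf0 (Classical.arbitrary S)).trans (hfC _)
    have hkey : (∑ s' : S, d t s' * f s') - (∑ s' : S, e t s' * f s')
        = ∑ s' : S, (d t s' - e t s') * (f s' - C / 2) := by
      have expand : ∑ s' : S, (d t s' - e t s') * (f s' - C / 2)
          = ((∑ s' : S, d t s' * f s') - (∑ s' : S, e t s' * f s'))
            - C / 2 * (∑ s' : S, d t s') + C / 2 * (∑ s' : S, e t s') := by
        simp only [Finset.mul_sum, ← Finset.sum_sub_distrib, ← Finset.sum_add_distrib]
        exact Finset.sum_congr rfl fun _ _ => by ring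
      rw [expand, (hd t).2, (he t).2]
      ring
    rw [hkey]
    calc |∑ s' : S, (d t s' - e t s') * (f s' - C / 2)|
        ≤ ∑ s' : S, |(d t s' - e t s') * (f s' - C / 2)| :=
          Finset.abs_sum_le_sum_abs _ _
      _ ≤ ∑ s' : S, |d t s' - e t s'| * (C / 2) := by
          refine Finset.sum_le_sum fun s' _ => ?_
          rw [abs_mul]
          refine mul_le_mul_of_nonneg_left ?_ (abs_nonneg _)
          rw [abs_le]
          constructor <;> [linarith [hf0 s']; linarith [hfC s']]
      _ = (∑ s' : S, |d t s' - e t s'|) * (C / 2) := by rw [Finset.sum_mul]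
      _ ≤ (2 * t * εm) * (C / 2) := by
          apply mul_le_mul_of_nonneg_right (hl1 t)
          linarith
      _ = C * t * εm := by ring
  have hRmax : 0 ≤ Rmax := (hr0 s (Classical.arbitrary A)).trans (hrmax _ _)
  have hVmax' : 0 ≤ Vmax := (hV0 s).trans (hVmax s)
  have hdiff : lookahead p r γ Vhat H π s - lookahead Mhat r γ Vhat H π s
      = (∑ t ∈ Finset.range H,
          γ ^ t * ((∑ s' : S, d t s' * r s' (π t s')) - ∑ s' : S, e t s' * r s' (π t s')))
        + γ ^ H * ((∑ s' : S, d H s' * Vhat s') - ∑ s' : S, e H s' * Vhat s') := by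
    simp only [lookahead, ← hd_def, ← he_def, mul_sub, Finset.sum_sub_distrib]
    ring
  rw [hdiff]
  calc |(∑ t ∈ Finset.range H,
          γ ^ t * ((∑ s' : S, d t s' * r s' (π t s')) - ∑ s' : S, e t s' * r s' (π t s')))
        + γ ^ H * ((∑ s' : S, d H s' * Vhat s') - ∑ s' : S, e H s' * Vhat s')|
      ≤ |∑ t ∈ Finset.range H,
          γ ^ t * ((∑ s' : S, d t s' * r s' (π t s')) - ∑ s' : S, e t s' * r s' (π t s'))|
        + |γ ^ H * ((∑ s' : S, d H s' * Vhat s') - ∑ s' : S, e H s' * Vhat s')| :=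
        abs_add_le _ _
    _ ≤ (∑ t ∈ Finset.range H, γ ^ t * (Rmax * t * εm)) + γ ^ H * (Vmax * H * εm) := by
        gcongr
        · refine (Finset.abs_sum_le_sum_abs _ _).trans ?_
          refine Finset.sum_le_sum fun t _ => ?_
          rw [abs_mul, abs_of_nonneg (pow_nonneg hγ0.le t)]
          exact mul_le_mul_of_nonneg_left
            (hint t (fun s' => r s' (π t s')) Rmax (fun x => hr0 _ _) (fun x => hrmax _ _))
            (pow_nonneg hγ0.le t)
        · rw [abs_mul, abs_of_nonneg (pow_nonneg hγ0.le H)]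
          exact mul_le_mul_of_nonneg_left
            (hint H Vhat Vmax hV0 hVmax) (pow_nonneg hγ0.le H)
    _ = Rmax * (∑ t ∈ Finset.range H, γ ^ t * (t : ℝ) * εm) + γ ^ H * (H : ℝ) * εm * Vmax := by
        rw [Finset.mul_sum]
        congr 1
        · exact Finset.sum_congr rfl fun t _ => by ring
        · ring
end

section
/- (One-step fitted-Q error bound under uniform loss deviation.) In a finite discounted MDP, let d be a probability mass function on S×A, let 𝒬 be a set of functions S×A → ℝ, and let L_D : 𝒬 × 𝒬 → ℝ be any function satisfying the uniform deviation bound |L_D(Q, Q') − L_d(Q, Q')| ≤ ε̃ for all Q, Q' ∈ 𝒬, where ε̃ ≥ 0. Suppose Q' ∈ 𝒬, TQ' ∈ 𝒬, and Q'' ∈ 𝒬 minimizes L_D(·, Q') over 𝒬 (i.e., L_D(Q'', Q') ≤ L_D(Q, Q') for all Q ∈ 𝒬). Then ‖Q'' − TQ'‖²_{2,d} ≤ 2·ε̃. -/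
/-- Bellman optimality operator of a finite discounted MDP. -/
noncomputable def bellmanT {S A : Type*} [Fintype S] [Fintype A] [Nonempty A]
    (p : S → A → S → ℝ) (r : S → A → ℝ) (γ : ℝ) (Q : S × A → ℝ) : S × A → ℝ :=
  fun sa => r sa.1 sa.2 + γ * ∑ s' : S, p sa.1 sa.2 s' * ⨆ a' : A, Q (s', a')

/-- Population Bellman regression loss under state-action distribution `d`. -/
noncomputable def bellmanLoss {S A : Type*} [Fintype S] [Fintype A] [Nonempty A]
    (p : S → A → S → ℝ) (r : S → A → ℝ) (γ : ℝ) (d : S × A → ℝ)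
    (Q Q' : S × A → ℝ) : ℝ :=
  ∑ sa : S × A, d sa * ∑ s' : S, p sa.1 sa.2 s' *
    (Q sa - r sa.1 sa.2 - γ * ⨆ a' : A, Q' (s', a')) ^ 2

/-- Squared weighted 2-norm of `g` under the distribution `d` on state-action pairs. -/
noncomputable def wnormSq {S A : Type*} [Fintype S] [Fintype A]
    (d : S × A → ℝ) (g : S × A → ℝ) : ℝ :=
  ∑ sa : S × A, d sa * g sa ^ 2

lemma sq_decomp {S : Type*} [Fintype S] (p : S → ℝ) (hp : ∑ s, p s = 1) (x : ℝ) (m : S → ℝ) :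
    ∑ s, p s * (x - m s) ^ 2 =
      (x - ∑ s, p s * m s) ^ 2 + ∑ s, p s * ((∑ t, p t * m t) - m s) ^ 2 := by
  set μ := ∑ s, p s * m s with hμ
  have e1 : ∀ s, p s * (x - m s) ^ 2 = x ^ 2 * p s - 2 * x * (p s * m s) + p s * m s ^ 2 :=
    fun s => by ring
  have e2 : ∀ s, p s * (μ - m s) ^ 2 = μ ^ 2 * p s - 2 * μ * (p s * m s) + p s * m s ^ 2 :=
    fun s => by ring
  simp_rw [e1, e2, Finset.sum_add_distrib, Finset.sum_sub_distrib, ← Finset.mul_sum, hp, ← hμ]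
  ring

/-- One-step fitted-Q error bound under a uniform deviation bound between the empirical
loss `L_D` and the population Bellman regression loss. -/
theorem fitted_q_one_step_bound
    {S A : Type*} [Fintype S] [Nonempty S] [Fintype A] [Nonempty A]
    (p : S → A → S → ℝ) (r : S → A → ℝ) (γ : ℝ)
    (hp_nonneg : ∀ s a s', 0 ≤ p s a s')
    (hp_sum : ∀ s a, ∑ s' : S, p s a s' = 1)
    (hγ0 : 0 < γ) (hγ1 : γ < 1)
    (d : S × A → ℝ) (hd_nonneg : ∀ sa, 0 ≤ d sa) (hd_sum : ∑ sa : S × A, d sa = 1)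
    (𝒬 : Set (S × A → ℝ)) (LD : (S × A → ℝ) → (S × A → ℝ) → ℝ) (εt : ℝ) (hεt : 0 ≤ εt)
    (hdev : ∀ Q ∈ 𝒬, ∀ Q' ∈ 𝒬, |LD Q Q' - bellmanLoss p r γ d Q Q'| ≤ εt)
    (Q' : S × A → ℝ) (hQ' : Q' ∈ 𝒬)
    (hTQ' : bellmanT p r γ Q' ∈ 𝒬)
    (Q'' : S × A → ℝ) (hQ'' : Q'' ∈ 𝒬)
    (hmin : ∀ Q ∈ 𝒬, LD Q'' Q' ≤ LD Q Q') :
    wnormSq d (fun sa => Q'' sa - bellmanT p r γ Q' sa) ≤ 2 * εt := by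
  -- bias-variance decomposition
  have hdecomp : ∀ Q : S × A → ℝ, bellmanLoss p r γ d Q Q' =
      wnormSq d (fun sa => Q sa - bellmanT p r γ Q' sa) +
        bellmanLoss p r γ d (bellmanT p r γ Q') Q' := by
    intro Q
    unfold bellmanLoss wnormSq
    rw [← Finset.sum_add_distrib]
    apply Finset.sum_congr rfl
    intro sa _
    rw [← mul_add]
    congr 1
    have key := sq_decomp (p sa.1 sa.2) (hp_sum sa.1 sa.2) (Q sa - r sa.1 sa.2)
      (fun s' => γ * ⨆ a' : A, Q' (s', a'))
    have h1 : ∀ s', Q sa - r sa.1 sa.2 - γ * ⨆ a' : A, Q' (s', a')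
        = (Q sa - r sa.1 sa.2) - (fun s' => γ * ⨆ a' : A, Q' (s', a')) s' := fun _ => rfl
    have hT : bellmanT p r γ Q' sa =
        r sa.1 sa.2 + ∑ s', p sa.1 sa.2 s' * (γ * ⨆ a' : A, Q' (s', a')) := by
      unfold bellmanT
      rw [Finset.mul_sum]
      congr 1
      apply Finset.sum_congr rfl
      intro s' _
      ring
    calc ∑ s', p sa.1 sa.2 s' * (Q sa - r sa.1 sa.2 - γ * ⨆ a' : A, Q' (s', a')) ^ 2
        = ((Q sa - r sa.1 sa.2) - ∑ s', p sa.1 sa.2 s' * (γ * ⨆ a' : A, Q' (s', a'))) ^ 2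
          + ∑ s', p sa.1 sa.2 s' *
            ((∑ t, p sa.1 sa.2 t * (γ * ⨆ a' : A, Q' (t, a'))) - γ * ⨆ a' : A, Q' (s', a')) ^ 2 :=
          key
      _ = (Q sa - bellmanT p r γ Q' sa) ^ 2
          + ∑ s', p sa.1 sa.2 s' *
            (bellmanT p r γ Q' sa - r sa.1 sa.2 - γ * ⨆ a' : A, Q' (s', a')) ^ 2 := by
          rw [hT]; congr 1
          · ring
          · apply Finset.sum_congr rfl; intro s' _; congr 2; ring
  have h1 := hdev Q'' hQ'' Q' hQ'
  have h2 := hdev (bellmanT p r γ Q') hTQ' Q' hQ'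
  have h3 := hmin (bellmanT p r γ Q') hTQ'
  have e1 := hdecomp Q''
  have e2 := hdecomp (bellmanT p r γ Q')
  have hw : wnormSq d (fun sa => bellmanT p r γ Q' sa - bellmanT p r γ Q' sa) = 0 := by
    unfold wnormSq; simp
  rw [hw] at e2
  rw [abs_le] at h1 h2
  linarith [h1.1, h1.2, h2.1, h2.2]
end
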